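/- arXiv:1809.01719 — 3 statements merged into one kernel-verified Lean document; each statement's English description precedes it below -/
import Mathlib

section
/- Let g(y) = 𝔞·(1 − e^{−βy}) on ℕ with 𝔞, β > 0 and p = 1. Let m: ℤ → ℕ be finitely supported and σ: ℤ → ℝ satisfy σ_{i−1} − σ_i = −β·m_i for all i ∈ ℤ, with σ_i < ln 𝔞 for all i. Then for every bounded cylinder function φ: ∫Lφ dν^{σ,m} = Σ_{i∈ℤ} (1 − e^{−β m_i})·(𝔞 − e^{σ_i})·[∫φ dν^{σ^{(i)}, m^{i,i+1}} − ∫φ dν^{σ,m}], where m^{i,i+1} denotes m with m_i decreased by 1 and m_{i+1} increased by 1, and σ^{(i)} agrees with σ except that σ^{(i)}_i = σ_i − β. (The sum is effectively finite since terms with m_i = 0 vanish.) -/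
open MeasureTheory Real

noncomputable def gfact (g : ℕ → ℝ) (z : ℕ) : ℝ := ∏ y ∈ Finset.Icc 1 z, g y

noncomputable def ZN (g : ℕ → ℝ) (θ : ℝ) : ℝ := ∑' z : ℕ, exp (θ * z) / gfact g z

noncomputable def muN (g : ℕ → ℝ) (θ : ℝ) (z : ℕ) : ℝ := exp (θ * z) / (gfact g z * ZN g θ)

abbrev ConfN : Type := ℤ → ℕ

/-- The configuration with one particle moved from site `i` to site `j`. -/
def moveN (η : ConfN) (i j : ℤ) : ConfN :=
  fun k => if k = i then η k - 1 else if k = j then η k + 1 else η k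

/-- The coupled zero range generator with right-jump probability `p` and rate function `g`,
acting on functions of the coupled pair of configurations. -/
noncomputable def LN (p : ℝ) (g : ℕ → ℝ) (φ : ConfN × ConfN → ℝ) (x : ConfN × ConfN) : ℝ :=
  ∑' i : ℤ,
    (p * g (x.1 i) * (φ (moveN x.1 i (i + 1), moveN x.2 i (i + 1)) - φ x)
      + p * (g (x.2 i) - g (x.1 i)) * (φ (x.1, moveN x.2 i (i + 1)) - φ x)
      + (1 - p) * g (x.1 i) * (φ (moveN x.1 i (i - 1), moveN x.2 i (i - 1)) - φ x)
      + (1 - p) * (g (x.2 i) - g (x.1 i)) * (φ (x.1, moveN x.2 i (i - 1)) - φ x))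

/-- A bounded cylinder function: bounded and depending on finitely many coordinates. -/
def IsBddCylinder (φ : ConfN × ConfN → ℝ) : Prop :=
  (∃ s : Finset ℤ, ∀ x y : ConfN × ConfN,
      (∀ i ∈ s, x.1 i = y.1 i ∧ x.2 i = y.2 i) → φ x = φ y)
    ∧ ∃ C : ℝ, ∀ x, |φ x| ≤ C

/-- The discrete measure on ℕ × ℕ with mass function `f`. -/
noncomputable def siteMeasure (f : ℕ × ℕ → ℝ) : Measure (ℕ × ℕ) :=
  Measure.count.withDensity fun yz => ENNReal.ofReal (f yz)

/-- `ν` is the product measure on `(ℕ × ℕ)^ℤ` with the given site marginals: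
every cylinder event has product probability. -/
def IsProductMeasure (fac : ℤ → Measure (ℕ × ℕ)) (ν : Measure (ConfN × ConfN)) : Prop :=
  ∀ (s : Finset ℤ) (B : ℤ → Set (ℕ × ℕ)),
    ν {x : ConfN × ConfN | ∀ i ∈ s, (x.1 i, x.2 i) ∈ B i} = ∏ i ∈ s, fac i (B i)

/-- The site marginals of the multi-shock measure `ν^{σ,m}`: at site `i`, the image of
`μ^{σ_i}` under `y ↦ (y, y + m_i)`. -/
noncomputable def multiFactor (g : ℕ → ℝ) (σ : ℤ → ℝ) (m : ℤ → ℕ) (i : ℤ) :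
    Measure (ℕ × ℕ) :=
  siteMeasure fun yz => if yz.2 = yz.1 + m i then muN g (σ i) yz.1 else 0

/-!
Under `ν^{σ,m}` the second configuration is almost surely the first plus `m`, and the first is
distributed as the product of the `μ^{σ_i}`. Two identities of these product measures drive the
computation. The Mecke-type identity `E[g(η_j) F(η)] = e^{σ_j} E[F(η + δ_j)]` comes from
`g(z+1) μ^θ(z+1) = e^θ μ^θ(z)`. The tilting identity
`E[𝔞 e^{-β η_i} F(η)] = (𝔞 - e^{σ_i}) E^{σ^{(i)}}[F(η)]` comes from
`Z(θ - β) = (1 - e^θ / 𝔞) Z(θ)`, which is special to `g(y) = 𝔞 (1 - e^{-β y})`.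
For this rate `g(η_i + m_i) - g(η_i) = (1 - e^{-β m_i}) 𝔞 e^{-β η_i}`, so tilting turns the part
of the generator that moves the second configuration alone into
`(1 - e^{-β m_i}) (𝔞 - e^{σ_i})` times an integral against `ν^{σ^{(i)}, m^{i,i+1}}`. By the Mecke
identity and `e^{σ_{i-1}} = e^{-β m_i} e^{σ_i}`, everything else is the telescoping difference
`b(i+1) - b(i)` of the finitely supported `b(j) = e^{σ_{j-1}} (E[φ(ξ + δ_j)] - E[φ])`.
-/

open Filter Topology

section Development

variable {𝔞 β θ : ℝ} {g : ℕ → ℝ} {σ : ℤ → ℝ} {m : ℤ → ℕ} {ν : Measure (ConfN × ConfN)}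
  {φ : ConfN × ConfN → ℝ}

/-! ### The single-site measures `μ^θ` -/

lemma gfact_succ (z : ℕ) : gfact g (z + 1) = gfact g z * g (z + 1) :=
  Finset.prod_Icc_succ_top (by omega) _

lemma gfact_pos (hg : ∀ y, 0 < g (y + 1)) (z : ℕ) : 0 < gfact g z :=
  Finset.prod_pos fun y hy => by
    obtain ⟨y, rfl⟩ := Nat.exists_eq_add_of_lt (Finset.mem_Icc.mp hy).1
    simpa using hg y

lemma rate_mul_exp_div_gfact_succ (z : ℕ) (hz : g (z + 1) ≠ 0) :
    g (z + 1) * (exp (θ * ↑(z + 1)) / gfact g (z + 1)) = exp θ * (exp (θ * z) / gfact g z) := by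
  rw [gfact_succ, Nat.cast_succ, mul_add_one, exp_add]
  field_simp

lemma hasSum_rate_mul (hg0 : g 0 = 0) (hg : ∀ y, g (y + 1) ≠ 0)
    (hs : Summable fun z : ℕ => exp (θ * z) / gfact g z) :
    HasSum (fun z : ℕ => g z * (exp (θ * z) / gfact g z)) (exp θ * ZN g θ) := by
  rw [← hasSum_nat_add_iff' 1]
  simpa only [Finset.range_one, Finset.sum_singleton, hg0, zero_mul, sub_zero,
    rate_mul_exp_div_gfact_succ _ (hg _), ZN] using hs.hasSum.mul_left (exp θ)

lemma muN_nonneg (hg : ∀ y, 0 ≤ g y) (z : ℕ) : 0 ≤ muN g θ z := by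
  have hf : ∀ z, 0 ≤ gfact g z := fun z => Finset.prod_nonneg fun y _ => hg y
  have hZ : 0 ≤ ZN g θ := tsum_nonneg fun z => div_nonneg (exp_pos _).le (hf z)
  exact div_nonneg (exp_pos _).le (mul_nonneg (hf z) hZ)

lemma muN_succ (z : ℕ) (hz : g (z + 1) ≠ 0) :
    g (z + 1) * muN g θ (z + 1) = exp θ * muN g θ z := by
  simp only [muN, ← div_div, ← mul_div_assoc, rate_mul_exp_div_gfact_succ z hz]

/-! ### The q-rate `g(y) = 𝔞 (1 - e^{-β y})` -/

lemma qrate_zero (hg : ∀ y : ℕ, g y = 𝔞 * (1 - exp (-β * y))) : g 0 = 0 := by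
  simp [hg]

lemma qrate_succ_pos (h𝔞 : 0 < 𝔞) (hβ : 0 < β) (hg : ∀ y : ℕ, g y = 𝔞 * (1 - exp (-β * y)))
    (y : ℕ) : 0 < g (y + 1) := by
  rw [hg]
  refine mul_pos h𝔞 (sub_pos.mpr (exp_lt_one_iff.mpr ?_))
  have : (0 : ℝ) < ↑(y + 1) := by positivity
  nlinarith

lemma qrate_nonneg (h𝔞 : 0 ≤ 𝔞) (hβ : 0 ≤ β) (hg : ∀ y : ℕ, g y = 𝔞 * (1 - exp (-β * y)))
    (y : ℕ) : 0 ≤ g y := by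
  rw [hg]
  refine mul_nonneg h𝔞 (sub_nonneg.mpr (exp_le_one_iff.mpr ?_))
  have : (0 : ℝ) ≤ y := by positivity
  nlinarith

lemma abs_qrate_le (h𝔞 : 0 ≤ 𝔞) (hβ : 0 ≤ β) (hg : ∀ y : ℕ, g y = 𝔞 * (1 - exp (-β * y)))
    (y : ℕ) : |g y| ≤ 𝔞 := by
  rw [abs_of_nonneg (qrate_nonneg h𝔞 hβ hg y), hg]
  nlinarith [exp_pos (-β * y)]

lemma sub_qrate (hg : ∀ y : ℕ, g y = 𝔞 * (1 - exp (-β * y))) (y : ℕ) :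
    𝔞 - g y = 𝔞 * exp (-β * y) := by
  rw [hg]; ring

lemma qrate_add_sub (hg : ∀ y : ℕ, g y = 𝔞 * (1 - exp (-β * y))) (y k : ℕ) :
    g (y + k) - g y = (1 - exp (-β * k)) * (𝔞 * exp (-β * y)) := by
  rw [hg, hg, Nat.cast_add, mul_add, exp_add]; ring

lemma tendsto_qrate (hβ : 0 < β) (hg : ∀ y : ℕ, g y = 𝔞 * (1 - exp (-β * y))) :
    Tendsto g atTop (𝓝 𝔞) := by
  have h : Tendsto (fun y : ℕ => exp (-β * y)) atTop (𝓝 0) :=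
    tendsto_exp_atBot.comp
      (tendsto_natCast_atTop_atTop.const_mul_atTop_of_neg (neg_lt_zero.mpr hβ))
  simpa [funext hg] using (h.const_sub 1).const_mul 𝔞

lemma summable_exp_mul_div_gfact (h𝔞 : 0 < 𝔞) (hβ : 0 < β)
    (hg : ∀ y : ℕ, g y = 𝔞 * (1 - exp (-β * y))) (hθ : exp θ < 𝔞) :
    Summable fun z : ℕ => exp (θ * z) / gfact g z := by
  have hpos := qrate_succ_pos h𝔞 hβ hg
  have ht : ∀ z : ℕ, 0 < exp (θ * z) / gfact g z := fun z => div_pos (exp_pos _) (gfact_pos hpos z)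
  have hratio : ∀ z : ℕ, ‖exp (θ * ↑(z + 1)) / gfact g (z + 1)‖ / ‖exp (θ * z) / gfact g z‖
      = exp θ / g (z + 1) := fun z => by
    rw [Real.norm_of_nonneg (ht _).le, Real.norm_of_nonneg (ht _).le,
      div_eq_div_iff (ht z).ne' (hpos z).ne', mul_comm,
      rate_mul_exp_div_gfact_succ z (hpos z).ne']
  refine summable_of_ratio_test_tendsto_lt_one ((div_lt_one h𝔞).mpr hθ)
    (Eventually.of_forall fun z => (ht z).ne') ?_
  simp_rw [hratio]
  exact tendsto_const_nhds.div ((tendsto_qrate hβ hg).comp (tendsto_add_atTop_nat 1)) h𝔞.ne'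

lemma ZN_sub (h𝔞 : 0 < 𝔞) (hβ : 0 < β) (hg : ∀ y : ℕ, g y = 𝔞 * (1 - exp (-β * y)))
    (hθ : exp θ < 𝔞) : ZN g (θ - β) = (1 - exp θ / 𝔞) * ZN g θ := by
  have hs := summable_exp_mul_div_gfact h𝔞 hβ hg hθ
  have h := hs.hasSum.sub ((hasSum_rate_mul (qrate_zero hg)
    (fun y => (qrate_succ_pos h𝔞 hβ hg y).ne') hs).div_const 𝔞)
  have hterm : (fun z : ℕ => exp ((θ - β) * z) / gfact g z)
      = fun z : ℕ => exp (θ * z) / gfact g z - g z * (exp (θ * z) / gfact g z) / 𝔞 := by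
    funext z
    rw [hg, show (θ - β) * (z : ℝ) = θ * z + -β * z by ring, exp_add]
    field_simp
    ring
  unfold ZN at h ⊢
  rw [hterm, h.tsum_eq]
  ring

lemma muN_sub (h𝔞 : 0 < 𝔞) (hβ : 0 < β) (hg : ∀ y : ℕ, g y = 𝔞 * (1 - exp (-β * y)))
    (hθ : exp θ < 𝔞) (z : ℕ) :
    (𝔞 - exp θ) * muN g (θ - β) z = 𝔞 * exp (-β * z) * muN g θ z := by
  have hs := summable_exp_mul_div_gfact h𝔞 hβ hg hθ
  have hZ : 0 < ZN g θ := hs.tsum_pos (fun z => div_nonneg (exp_pos _).le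
    (gfact_pos (qrate_succ_pos h𝔞 hβ hg) z).le) 0 (by simp [gfact])
  have hf := gfact_pos (qrate_succ_pos h𝔞 hβ hg) z
  have h𝔞θ : 𝔞 - exp θ ≠ 0 := (sub_pos.mpr hθ).ne'
  rw [muN, muN, ZN_sub h𝔞 hβ hg hθ, show (θ - β) * (z : ℝ) = θ * z + -β * z by ring, exp_add]
  field_simp

/-! ### Configurations -/

lemma moveN_apply_of_ne {η : ConfN} {i j k : ℤ} (hi : k ≠ i) (hj : k ≠ j) :
    moveN η i j k = η k := by
  simp [moveN, hi, hj]

lemma moveN_apply_congr {η η' : ConfN} {k : ℤ} (h : η k = η' k) (i j : ℤ) :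
    moveN η i j k = moveN η' i j k := by
  simp only [moveN, h]

lemma moveN_add_single (η : ConfN) {i j : ℤ} (hij : i ≠ j) :
    moveN (η + Pi.single i 1) i j = η + Pi.single j 1 := by
  funext k
  by_cases hi : k = i
  · subst hi; simp [moveN, hij]
  · by_cases hj : k = j
    · subst hj; simp [moveN, Ne.symm hij]
    · simp [moveN, hi, hj]

lemma moveN_add (η m : ConfN) {i j : ℤ} (hm : 1 ≤ m i) (hij : i ≠ j) :
    moveN (η + m) i j = η + moveN m i j := by
  funext k
  by_cases hi : k = i
  · subst hi; simp only [moveN, if_true, Pi.add_apply]; omega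
  · by_cases hj : k = j
    · subst hj; simp [moveN, Ne.symm hij, add_assoc]
    · simp [moveN, hi, hj]

lemma support_moveN_finite (hm : (Function.support m).Finite) (i j : ℤ) :
    (Function.support (moveN m i j)).Finite :=
  (hm.union (Set.finite_singleton j)).subset fun k hk => by
    by_cases hj : k = j
    · exact Or.inr hj
    · refine Or.inl fun hmk => hk ?_
      by_cases hi : k = i
      · subst hi; simp [moveN, hmk]
      · simp [moveN, hi, hj, hmk]

def zeroExtend (T : Finset ℤ) (y : T → ℕ) : ConfN :=
  fun j => if h : j ∈ T then y ⟨j, h⟩ else 0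

lemma zeroExtend_update_succ {T : Finset ℤ} (y : T → ℕ) (j : T) :
    zeroExtend T (Function.update y j (y j + 1)) = zeroExtend T y + Pi.single (j : ℤ) 1 := by
  funext k
  by_cases hk : k ∈ T
  · by_cases hkj : k = j
    · subst hkj; simp [zeroExtend, hk]
    · have : (⟨k, hk⟩ : T) ≠ j := fun h => hkj (congrArg Subtype.val h)
      simp [zeroExtend, hk, hkj, Function.update_of_ne this]
  · have hkj : k ≠ j := fun h => hk (h ▸ j.2)
    simp [zeroExtend, hk, hkj]

def addParticle (j : ℤ) (x : ConfN × ConfN) : ConfN × ConfN :=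
  (x.1 + Pi.single j 1, x.2 + Pi.single j 1)

def siteTerm (g : ℕ → ℝ) (φ : ConfN × ConfN → ℝ) (i : ℤ) (x : ConfN × ConfN) : ℝ :=
  g (x.1 i) * (φ (moveN x.1 i (i + 1), moveN x.2 i (i + 1)) - φ x)
    + (g (x.2 i) - g (x.1 i)) * (φ (x.1, moveN x.2 i (i + 1)) - φ x)

lemma LN_one_eq_tsum (x : ConfN × ConfN) :
    LN 1 g φ x = ∑' i, siteTerm g φ i x := by
  simp only [LN, siteTerm, one_mul, sub_self, zero_mul, add_zero]

/-! ### Bounded cylinder functions -/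

lemma IsProductMeasure.isProbabilityMeasure {fac : ℤ → Measure (ℕ × ℕ)}
    (hp : IsProductMeasure fac ν) : IsProbabilityMeasure ν :=
  ⟨by simpa using hp ∅ fun _ => Set.univ⟩

namespace IsBddCylinder

variable {F G : ConfN × ConfN → ℝ}

lemma measurable (hF : IsBddCylinder F) : Measurable F := by
  obtain ⟨⟨s, hs⟩, -⟩ := hF
  let proj : ConfN × ConfN → (s → ℕ × ℕ) := fun x j => (x.1 j, x.2 j)
  have hproj : Measurable proj := measurable_pi_lambda _ fun j =>
    ((measurable_pi_apply (j : ℤ)).comp measurable_fst).prodMk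
      ((measurable_pi_apply (j : ℤ)).comp measurable_snd)
  have hF : F = (fun c => F (zeroExtend s fun j => (c j).1, zeroExtend s fun j => (c j).2))
      ∘ proj :=
    funext fun x => hs _ _ fun j hj => by simp [proj, zeroExtend, hj]
  rw [hF]
  exact (measurable_of_countable _).comp hproj

lemma integrable {fac : ℤ → Measure (ℕ × ℕ)} (hF : IsBddCylinder F)
    (hp : IsProductMeasure fac ν) : Integrable F ν :=
  haveI := hp.isProbabilityMeasure
  Integrable.of_bound hF.measurable.aestronglyMeasurable _ (Eventually.of_forall hF.2.choose_spec)

lemma map₂ (op : ℝ → ℝ → ℝ) (hop : ∀ C D : ℝ, ∃ B, ∀ a b, |a| ≤ C → |b| ≤ D → |op a b| ≤ B)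
    (hF : IsBddCylinder F) (hG : IsBddCylinder G) : IsBddCylinder fun x => op (F x) (G x) := by
  obtain ⟨⟨s, hs⟩, C, hC⟩ := hF
  obtain ⟨⟨t, ht⟩, D, hD⟩ := hG
  obtain ⟨B, hB⟩ := hop C D
  refine ⟨⟨s ∪ t, fun x y h => ?_⟩, B, fun x => hB _ _ (hC x) (hD x)⟩
  dsimp only
  rw [hs x y fun i hi => h i (Finset.mem_union_left _ hi),
    ht x y fun i hi => h i (Finset.mem_union_right _ hi)]

lemma add (hF : IsBddCylinder F) (hG : IsBddCylinder G) : IsBddCylinder fun x => F x + G x :=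
  map₂ (· + ·) (fun C D => ⟨C + D, fun a b ha hb => (abs_add_le a b).trans (add_le_add ha hb)⟩)
    hF hG

lemma sub (hF : IsBddCylinder F) (hG : IsBddCylinder G) : IsBddCylinder fun x => F x - G x :=
  map₂ (· - ·) (fun C D => ⟨C + D, fun a b ha hb => (abs_sub a b).trans (add_le_add ha hb)⟩)
    hF hG

lemma mul (hF : IsBddCylinder F) (hG : IsBddCylinder G) : IsBddCylinder fun x => F x * G x :=
  map₂ (· * ·) (fun C D => ⟨C * D, fun a b ha hb => by
    rw [abs_mul]; exact mul_le_mul ha hb (abs_nonneg _) ((abs_nonneg _).trans ha)⟩) hF hG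

lemma comp_sitewise (hF : IsBddCylinder F) (a : ConfN × ConfN → ConfN × ConfN)
    (ha : ∀ x y k, x.1 k = y.1 k → x.2 k = y.2 k → (a x).1 k = (a y).1 k ∧ (a x).2 k = (a y).2 k) :
    IsBddCylinder fun x => F (a x) := by
  obtain ⟨⟨s, hs⟩, C, hC⟩ := hF
  exact ⟨⟨s, fun x y h => hs _ _ fun k hk => ha x y k (h k hk).1 (h k hk).2⟩, C, fun x => hC _⟩

lemma rate_fst {A : ℝ} (hg : ∀ y, |g y| ≤ A) (i : ℤ) :
    IsBddCylinder fun x => g (x.1 i) :=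
  ⟨⟨{i}, fun _ _ h => congrArg g (h i (Finset.mem_singleton_self i)).1⟩, A, fun _ => hg _⟩

lemma rate_snd {A : ℝ} (hg : ∀ y, |g y| ≤ A) (i : ℤ) :
    IsBddCylinder fun x => g (x.2 i) :=
  ⟨⟨{i}, fun _ _ h => congrArg g (h i (Finset.mem_singleton_self i)).2⟩, A, fun _ => hg _⟩

lemma exists_dependsOn {f : ConfN → ℝ} (hf : IsBddCylinder fun x => f x.1) :
    ∃ s : Finset ℤ, DependsOn f s :=
  let ⟨⟨s, hs⟩, _⟩ := hf
  ⟨s, fun η η' h => hs (η, 0) (η', 0) fun i hi => ⟨h i hi, rfl⟩⟩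

lemma moveN_both (hφ : IsBddCylinder φ) (i j : ℤ) :
    IsBddCylinder fun x => φ (moveN x.1 i j, moveN x.2 i j) :=
  hφ.comp_sitewise _ fun _ _ _ h1 h2 => ⟨moveN_apply_congr h1 i j, moveN_apply_congr h2 i j⟩

lemma moveN_snd (hφ : IsBddCylinder φ) (i j : ℤ) :
    IsBddCylinder fun x => φ (x.1, moveN x.2 i j) :=
  hφ.comp_sitewise _ fun _ _ _ h1 h2 => ⟨h1, moveN_apply_congr h2 i j⟩

lemma siteTerm {A : ℝ} (hA : ∀ y, |g y| ≤ A) (hφ : IsBddCylinder φ) (i : ℤ) :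
    IsBddCylinder (siteTerm g φ i) :=
  ((rate_fst hA i).mul ((hφ.moveN_both i (i + 1)).sub hφ)).add
    (((rate_snd hA i).sub (rate_fst hA i)).mul ((hφ.moveN_snd i (i + 1)).sub hφ))

end IsBddCylinder

/-! ### Product measures -/

lemma tsum_eq_tsum_update_succ {ι M : Type*} [DecidableEq ι] [AddCommMonoid M]
    [TopologicalSpace M] (F : (ι → ℕ) → M) (i : ι) (hF : ∀ y, y i = 0 → F y = 0) :
    ∑' y, F y = ∑' y, F (Function.update y i (y i + 1)) := by
  refine (Function.Injective.tsum_eq (fun y y' h => funext fun k => ?_) fun y hy => ?_).symm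
  · by_cases hk : k = i
    · subst hk; simpa using congrFun h k
    · simpa [Function.update_of_ne hk] using congrFun h k
  · refine ⟨Function.update y i (y i - 1), funext fun k => ?_⟩
    have : y i ≠ 0 := fun h0 => hy (hF y h0)
    by_cases hk : k = i
    · subst hk; simp; omega
    · simp [Function.update_of_ne hk]

lemma multiFactor_apply (i : ℤ) (S : Set (ℕ × ℕ)) :
    multiFactor g σ m i S
      = ∑' z : ℕ, S.indicator (fun p => ENNReal.ofReal (muN g (σ i) p.1)) (z, z + m i) := by
  have hS : MeasurableSet S := S.to_countable.measurableSet
  rw [multiFactor, siteMeasure, withDensity_apply _ hS, ← lintegral_indicator hS, lintegral_count]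
  refine (Function.Injective.tsum_eq (g := fun z : ℕ => (z, z + m i))
    (fun z z' h => (Prod.mk.inj h).1) fun p hp => ⟨p.1, ?_⟩).symm.trans ?_
  · by_contra h
    have h2 : p.2 ≠ p.1 + m i := fun h2 => h (Prod.ext rfl h2.symm)
    exact hp (by simp [h2])
  · exact tsum_congr fun z => by simp [Set.indicator]

lemma multiFactor_compl_diag (i : ℤ) :
    multiFactor g σ m i {p | p.2 = p.1 + m i}ᶜ = 0 := by
  simp [multiFactor_apply]

lemma multiFactor_fst_eq (hg : ∀ y, 0 ≤ g y) (i : ℤ) (z : ℕ) :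
    (multiFactor g σ m i {p | p.1 = z}).toReal = muN g (σ i) z := by
  rw [multiFactor_apply, tsum_eq_single z fun z' hz' => by simp [hz'],
    Set.indicator_of_mem (show (z, z + m i) ∈ {p : ℕ × ℕ | p.1 = z} from rfl),
    ENNReal.toReal_ofReal (muN_nonneg hg z)]

lemma ae_snd_eq (hp : IsProductMeasure (multiFactor g σ m) ν) : ∀ᵐ x ∂ν, x.2 = x.1 + m := by
  have hsite : ∀ i, ∀ᵐ x ∂ν, x.2 i = x.1 i + m i := fun i => by
    simpa [ae_iff, multiFactor_compl_diag] using hp {i} fun j => {p | p.2 = p.1 + m j}ᶜ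
  filter_upwards [ae_all_iff.mpr hsite] with x hx using funext hx

lemma integral_eq_integral_fst_add (hp : IsProductMeasure (multiFactor g σ m) ν)
    (F : ConfN × ConfN → ℝ) : ∫ x, F x ∂ν = ∫ x, F (x.1, x.1 + m) ∂ν :=
  integral_congr_ae ((ae_snd_eq hp).mono fun x hx => by simp only [← hx])

lemma integral_fst_eq_tsum (hg : ∀ y, 0 ≤ g y) (hp : IsProductMeasure (multiFactor g σ m) ν)
    {f : ConfN → ℝ} {T : Finset ℤ} (hfT : DependsOn f T) {C : ℝ} (hC : ∀ η, |f η| ≤ C) :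
    ∫ x, f x.1 ∂ν
      = ∑' y : T → ℕ, (∏ j ∈ T, muN g (σ j) (zeroExtend T y j)) * f (zeroExtend T y) := by
  have := hp.isProbabilityMeasure
  let r : ConfN × ConfN → (T → ℕ) := fun x j => x.1 j
  have hr : Measurable r :=
    measurable_pi_lambda _ fun j => (measurable_pi_apply (j : ℤ)).comp measurable_fst
  have hfr : ∀ x : ConfN × ConfN, f x.1 = f (zeroExtend T (r x)) :=
    fun x => hfT fun j hj => by simp [r, zeroExtend, Finset.mem_coe.mp hj]
  have hint : Integrable (fun y => f (zeroExtend T y)) (ν.map r) :=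
    Integrable.of_bound (measurable_of_countable _).aestronglyMeasurable C
      (Eventually.of_forall fun y => hC _)
  have hfiber : ∀ y : T → ℕ, r ⁻¹' {y}
      = {x | ∀ j ∈ T, (x.1 j, x.2 j) ∈ (fun j => {p : ℕ × ℕ | p.1 = zeroExtend T y j}) j} := by
    intro y
    ext x
    simp only [Set.mem_preimage, Set.mem_singleton_iff, funext_iff, Subtype.forall,
      Set.mem_ofPred_eq]
    exact forall₂_congr fun j hj => by simp [r, zeroExtend, hj]
  simp only [hfr]
  rw [← integral_map (f := fun y => f (zeroExtend T y)) hr.aemeasurable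
      (measurable_of_countable _).aestronglyMeasurable,
    integral_countable hint]
  refine tsum_congr fun y => ?_
  rw [smul_eq_mul, measureReal_def, Measure.map_apply hr (measurableSet_singleton y), hfiber,
    hp T, ENNReal.toReal_prod]
  simp only [multiFactor_fst_eq hg]

lemma rate_mul_prod_muN_add_single {T : Finset ℤ} {j : ℤ} (hj : j ∈ T) (η : ConfN)
    (hg : g (η j + 1) ≠ 0) :
    g (η j + 1) * ∏ k ∈ T, muN g (σ k) (η k + (Pi.single j 1 : ConfN) k)
      = exp (σ j) * ∏ k ∈ T, muN g (σ k) (η k) := by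
  rw [← Finset.mul_prod_erase T _ hj, ← Finset.mul_prod_erase T _ hj, ← mul_assoc, ← mul_assoc,
    Pi.single_eq_same, muN_succ _ hg]
  congr 1
  refine Finset.prod_congr rfl fun k hk => ?_
  rw [Pi.single_eq_of_ne (Finset.ne_of_mem_erase hk), add_zero]

lemma prod_muN_update {T : Finset ℤ} {j : ℤ} (hj : j ∈ T) (η : ConfN) (c : ℝ) :
    ∏ k ∈ T, muN g (Function.update σ j c k) (η k)
      = muN g c (η j) * ∏ k ∈ T.erase j, muN g (σ k) (η k) := by
  rw [← Finset.mul_prod_erase T _ hj, Function.update_self]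
  congr 1
  exact Finset.prod_congr rfl fun k hk => by rw [Function.update_of_ne (Finset.ne_of_mem_erase hk)]

lemma integral_rate_mul_fst (hg0 : g 0 = 0) (hg : ∀ y, 0 < g (y + 1)) {A : ℝ}
    (hA : ∀ y, |g y| ≤ A) (hp : IsProductMeasure (multiFactor g σ m) ν) {f : ConfN → ℝ}
    (hf : IsBddCylinder fun x => f x.1) (j : ℤ) :
    ∫ x, g (x.1 j) * f x.1 ∂ν = exp (σ j) * ∫ x, f (x.1 + Pi.single j 1) ∂ν := by
  have hg' : ∀ y, 0 ≤ g y := fun y => by cases y <;> simp [hg0, (hg _).le]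
  obtain ⟨s, hs⟩ := hf.exists_dependsOn
  obtain ⟨C, hC⟩ := hf.2
  have hjT : j ∈ insert j s := Finset.mem_insert_self j s
  have hsT : (s : Set ℤ) ⊆ ↑(insert j s) := Finset.coe_subset.mpr (Finset.subset_insert j s)
  have hdep : DependsOn (fun η => g (η j) * f η) ↑(insert j s) := fun η η' h => by
    dsimp only
    rw [h j hjT, hs.mono hsT h]
  have hdep' : DependsOn (fun η => f (η + Pi.single j 1)) ↑(insert j s) := fun η η' h =>
    hs.mono hsT fun k hk => by simp [h k hk]
  rw [integral_fst_eq_tsum hg' hp hdep (C := A * C) fun η => by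
      rw [abs_mul]
      exact mul_le_mul (hA _) (hC (η, η)) (abs_nonneg _) ((abs_nonneg _).trans (hA 0)),
    integral_fst_eq_tsum hg' hp hdep' (C := C) fun η => hC (_, η),
    tsum_eq_tsum_update_succ _ ⟨j, hjT⟩ fun y hy => by simp [zeroExtend, hy, hg0],
    ← tsum_mul_left]
  refine tsum_congr fun y => ?_
  simp only [zeroExtend_update_succ, Pi.add_apply, Pi.single_eq_same]
  rw [mul_left_comm, ← mul_assoc, ← mul_assoc,
    rate_mul_prod_muN_add_single hjT _ (hg _).ne']

lemma integral_rate_mul (hg0 : g 0 = 0) (hg : ∀ y, 0 < g (y + 1)) {A : ℝ}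
    (hA : ∀ y, |g y| ≤ A) (hp : IsProductMeasure (multiFactor g σ m) ν)
    {F : ConfN × ConfN → ℝ} (hF : IsBddCylinder F) (j : ℤ) :
    ∫ x, g (x.1 j) * F x ∂ν
      = exp (σ j) * ∫ x, F (addParticle j x) ∂ν := by
  have hlhs := integral_eq_integral_fst_add hp fun x => g (x.1 j) * F x
  have hrhs := integral_eq_integral_fst_add hp fun x => F (addParticle j x)
  dsimp only at hlhs hrhs
  rw [hlhs, hrhs, integral_rate_mul_fst hg0 hg hA hp (f := fun η => F (η, η + m))
      (hF.comp_sitewise _ fun x y k h _ => by simp [h])]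
  simp only [addParticle, add_right_comm _ (Pi.single j 1) m]

lemma integral_tilt_fst (h𝔞 : 0 < 𝔞) (hβ : 0 < β)
    (hg : ∀ y : ℕ, g y = 𝔞 * (1 - exp (-β * y))) {i : ℤ} (hσi : exp (σ i) < 𝔞)
    (hp : IsProductMeasure (multiFactor g σ m) ν) {m' : ℤ → ℕ} {ν' : Measure (ConfN × ConfN)}
    (hp' : IsProductMeasure (multiFactor g (Function.update σ i (σ i - β)) m') ν')
    {f : ConfN → ℝ} (hf : IsBddCylinder fun x => f x.1) :
    ∫ x, 𝔞 * exp (-β * x.1 i) * f x.1 ∂ν = (𝔞 - exp (σ i)) * ∫ x, f x.1 ∂ν' := by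
  have hg' := qrate_nonneg h𝔞.le hβ.le hg
  obtain ⟨s, hs⟩ := hf.exists_dependsOn
  obtain ⟨C, hC⟩ := hf.2
  have hiT : i ∈ insert i s := Finset.mem_insert_self i s
  have hsT : (s : Set ℤ) ⊆ ↑(insert i s) := Finset.coe_subset.mpr (Finset.subset_insert i s)
  have hdep : DependsOn (fun η => 𝔞 * exp (-β * η i) * f η) ↑(insert i s) := fun η η' h => by
    dsimp only
    rw [h i hiT, hs.mono hsT h]
  have hbound : ∀ η : ConfN, |𝔞 * exp (-β * η i) * f η| ≤ 𝔞 * C := fun η => by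
    have he : exp (-β * η i) ≤ 1 :=
      exp_le_one_iff.mpr (mul_nonpos_of_nonpos_of_nonneg (neg_nonpos.mpr hβ.le) (Nat.cast_nonneg _))
    rw [abs_mul, abs_mul, abs_of_pos h𝔞, abs_of_pos (exp_pos _)]
    calc 𝔞 * exp (-β * η i) * |f η| ≤ 𝔞 * 1 * C := by gcongr; exact hC (η, η)
      _ = 𝔞 * C := by ring
  rw [integral_fst_eq_tsum hg' hp hdep hbound,
    integral_fst_eq_tsum hg' hp' (hs.mono hsT) fun η => hC (η, η), ← tsum_mul_left]
  refine tsum_congr fun y => ?_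
  rw [prod_muN_update hiT, ← Finset.mul_prod_erase _ _ hiT]
  linear_combination -((∏ k ∈ (insert i s).erase i, muN g (σ k) (zeroExtend _ y k))
    * f (zeroExtend _ y)) * muN_sub h𝔞 hβ hg hσi (zeroExtend _ y i)

/-! ### The generator -/

lemma integral_tsum_of_forall_notMem_eq_zero {α ι : Type*} [MeasurableSpace α] {μ : Measure α}
    {F : ι → α → ℝ} (U : Finset ι) (hF : ∀ i ∉ U, F i = 0) (hint : ∀ i, Integrable (F i) μ) :
    ∫ x, ∑' i, F i x ∂μ = ∑' i, ∫ x, F i x ∂μ := by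
  simp_rw [tsum_eq_sum (s := U) fun i hi => congrFun (hF i hi) _]
  rw [integral_finsetSum U fun i _ => hint i, tsum_eq_sum fun i hi => by simp [hF i hi]]

lemma hasSum_sub_shift {f : ℤ → ℝ} (hf : (Function.support f).Finite) :
    HasSum (fun i => f (i + 1) - f i) 0 := by
  have hs : Summable f := summable_of_hasFiniteSupport hf
  simpa using ((Equiv.addRight (1 : ℤ)).hasSum_iff.mpr hs.hasSum).sub hs.hasSum

lemma siteTerm_eq_zero {s : Finset ℤ}
    (hs : ∀ x y : ConfN × ConfN, (∀ k ∈ s, x.1 k = y.1 k ∧ x.2 k = y.2 k) → φ x = φ y)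
    {i : ℤ} (hi : i ∉ s) (hi1 : i + 1 ∉ s) : siteTerm g φ i = 0 := by
  have hmove : ∀ η : ConfN, ∀ k ∈ s, moveN η i (i + 1) k = η k := fun η k hk =>
    moveN_apply_of_ne (ne_of_mem_of_not_mem hk hi) (ne_of_mem_of_not_mem hk hi1)
  funext x
  rw [siteTerm, hs _ x fun k hk => ⟨hmove _ k hk, hmove _ k hk⟩,
    hs (x.1, moveN x.2 i (i + 1)) x fun k hk => ⟨rfl, hmove _ k hk⟩]
  simp

lemma integral_addParticle_of_notMem {s : Finset ℤ}
    (hs : ∀ x y : ConfN × ConfN, (∀ k ∈ s, x.1 k = y.1 k ∧ x.2 k = y.2 k) → φ x = φ y)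
    {j : ℤ} (hj : j ∉ s) : ∫ x, φ (addParticle j x) ∂ν = ∫ x, φ x ∂ν := by
  congr 1
  funext x
  exact hs _ _ fun k hk => by
    simp [addParticle, Pi.single_eq_of_ne (ne_of_mem_of_not_mem hk hj)]

lemma integral_LN_one {fac : ℤ → Measure (ℕ × ℕ)} {A : ℝ} (hA : ∀ y, |g y| ≤ A)
    (hp : IsProductMeasure fac ν) (hφ : IsBddCylinder φ) :
    ∫ x, LN 1 g φ x ∂ν = ∑' i, ∫ x, siteTerm g φ i x ∂ν := by
  obtain ⟨s, hs⟩ := hφ.1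
  simp only [LN_one_eq_tsum]
  refine integral_tsum_of_forall_notMem_eq_zero (s ∪ s.image (· - 1)) (fun i hi => ?_)
    fun i => (hφ.siteTerm hA i).integrable hp
  simp only [Finset.mem_union, Finset.mem_image, not_or, not_exists, not_and] at hi
  exact siteTerm_eq_zero hs hi.1 fun h => hi.2 _ h (by ring)

lemma integral_jump (hg0 : g 0 = 0) (hg : ∀ y, 0 < g (y + 1)) {A : ℝ} (hA : ∀ y, |g y| ≤ A)
    (hp : IsProductMeasure (multiFactor g σ m) ν) (hφ : IsBddCylinder φ) (i : ℤ) :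
    ∫ x, g (x.1 i) * (φ (moveN x.1 i (i + 1), moveN x.2 i (i + 1)) - φ x) ∂ν
      = exp (σ i) * (∫ x, φ (addParticle (i + 1) x) ∂ν - ∫ x, φ (addParticle i x) ∂ν) := by
  simp_rw [mul_sub]
  rw [integral_sub (((IsBddCylinder.rate_fst hA i).mul (hφ.moveN_both i (i + 1))).integrable hp)
      (((IsBddCylinder.rate_fst hA i).mul hφ).integrable hp),
    integral_rate_mul hg0 hg hA hp (hφ.moveN_both i (i + 1)), integral_rate_mul hg0 hg hA hp hφ]
  simp only [addParticle, moveN_add_single _ (lt_add_one i).ne]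

lemma integral_shock_move (h𝔞 : 0 < 𝔞) (hβ : 0 < β)
    (hg : ∀ y : ℕ, g y = 𝔞 * (1 - exp (-β * y))) {i : ℤ} (hσi : exp (σ i) < 𝔞)
    (hp : IsProductMeasure (multiFactor g σ m) ν) {ν' : Measure (ConfN × ConfN)}
    (hp' : 1 ≤ m i →
      IsProductMeasure (multiFactor g (Function.update σ i (σ i - β)) (moveN m i (i + 1))) ν')
    (hφ : IsBddCylinder φ) :
    ∫ x, (g (x.2 i) - g (x.1 i)) * φ (x.1, moveN x.2 i (i + 1)) ∂ν
      = (1 - exp (-β * m i)) * ((𝔞 - exp (σ i)) * ∫ x, φ x ∂ν') := by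
  rcases Nat.eq_zero_or_pos (m i) with hmi | hmi
  · have hzero : ∀ᵐ x ∂ν, (g (x.2 i) - g (x.1 i)) * φ (x.1, moveN x.2 i (i + 1)) = 0 :=
      (ae_snd_eq hp).mono fun x hx => by simp [hx, hmi]
    simp [integral_congr_ae hzero, hmi]
  · rw [integral_eq_integral_fst_add hp, integral_eq_integral_fst_add (hp' hmi) φ]
    simp only [Pi.add_apply, qrate_add_sub hg, moveN_add _ _ hmi (lt_add_one i).ne]
    simp_rw [mul_assoc (1 - exp (-β * m i))]
    rw [integral_const_mul, integral_tilt_fst h𝔞 hβ hg hσi hp (hp' hmi)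
      (f := fun η => φ (η, η + moveN m i (i + 1)))
      (hφ.comp_sitewise _ fun _ _ _ h _ => by simp [h])]

lemma integral_shock_stay (h𝔞 : 0 < 𝔞) (hβ : 0 < β)
    (hg : ∀ y : ℕ, g y = 𝔞 * (1 - exp (-β * y)))
    (hp : IsProductMeasure (multiFactor g σ m) ν) (hφ : IsBddCylinder φ) (i : ℤ) :
    ∫ x, (g (x.2 i) - g (x.1 i)) * φ x ∂ν
      = (1 - exp (-β * m i)) * (𝔞 * ∫ x, φ x ∂ν - exp (σ i) * ∫ x, φ (addParticle i x) ∂ν) := by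
  have hA := abs_qrate_le h𝔞.le hβ.le hg
  have hae : ∀ᵐ x ∂ν, (g (x.2 i) - g (x.1 i)) * φ x
      = (1 - exp (-β * m i)) * (𝔞 * φ x - g (x.1 i) * φ x) :=
    (ae_snd_eq hp).mono fun x hx => by
      rw [hx, Pi.add_apply, qrate_add_sub hg, ← sub_qrate hg]
      ring
  rw [integral_congr_ae hae, integral_const_mul,
    integral_sub ((hφ.integrable hp).const_mul 𝔞)
      (((IsBddCylinder.rate_fst hA i).mul hφ).integrable hp),
    integral_const_mul, integral_rate_mul (qrate_zero hg) (qrate_succ_pos h𝔞 hβ hg) hA hp hφ]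

lemma integral_siteTerm (h𝔞 : 0 < 𝔞) (hβ : 0 < β)
    (hg : ∀ y : ℕ, g y = 𝔞 * (1 - exp (-β * y))) {i : ℤ} (hσ : σ (i - 1) - σ i = -β * m i)
    (hσi : exp (σ i) < 𝔞) (hp : IsProductMeasure (multiFactor g σ m) ν)
    {ν' : Measure (ConfN × ConfN)}
    (hp' : 1 ≤ m i →
      IsProductMeasure (multiFactor g (Function.update σ i (σ i - β)) (moveN m i (i + 1))) ν')
    (hφ : IsBddCylinder φ) :
    ∫ x, siteTerm g φ i x ∂ν
      = (1 - exp (-β * m i)) * (𝔞 - exp (σ i)) * (∫ x, φ x ∂ν' - ∫ x, φ x ∂ν)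
        + (exp (σ i) * (∫ x, φ (addParticle (i + 1) x) ∂ν - ∫ x, φ x ∂ν)
          - exp (σ (i - 1)) * (∫ x, φ (addParticle i x) ∂ν - ∫ x, φ x ∂ν)) := by
  have hA := abs_qrate_le h𝔞.le hβ.le hg
  have hexp : exp (σ (i - 1)) = exp (-β * m i) * exp (σ i) := by
    rw [← exp_add]; congr 1; linarith
  have hshock := (IsBddCylinder.rate_snd hA i).sub (IsBddCylinder.rate_fst hA i)
  have hmove := (hshock.mul (hφ.moveN_snd i (i + 1))).integrable hp
  have hstay := (hshock.mul hφ).integrable hp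
  have hjump := ((IsBddCylinder.rate_fst hA i).mul ((hφ.moveN_both i (i + 1)).sub hφ)).integrable hp
  have hsplit : ∫ x, (g (x.2 i) - g (x.1 i)) * (φ (x.1, moveN x.2 i (i + 1)) - φ x) ∂ν
      = ∫ x, (g (x.2 i) - g (x.1 i)) * φ (x.1, moveN x.2 i (i + 1)) ∂ν
        - ∫ x, (g (x.2 i) - g (x.1 i)) * φ x ∂ν := by
    rw [← integral_sub hmove hstay]
    simp_rw [mul_sub]
  simp only [siteTerm]
  rw [integral_add hjump ((hshock.mul ((hφ.moveN_snd i (i + 1)).sub hφ)).integrable hp), hsplit,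
    integral_jump (qrate_zero hg) (qrate_succ_pos h𝔞 hβ hg) hA hp hφ,
    integral_shock_move h𝔞 hβ hg hσi hp hp' hφ,
    integral_shock_stay h𝔞 hβ hg hp hφ, hexp]
  ring

lemma update_sub_moveN (hσ : ∀ i : ℤ, σ (i - 1) - σ i = -β * m i) {i : ℤ} (hmi : 1 ≤ m i)
    (j : ℤ) :
    Function.update σ i (σ i - β) (j - 1) - Function.update σ i (σ i - β) j
      = -β * moveN m i (i + 1) j := by
  by_cases hji : j = i
  · subst hji
    simp [moveN, Nat.cast_sub hmi]
    linarith [hσ j]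
  · by_cases hj1 : j = i + 1
    · subst hj1
      have h := hσ (i + 1)
      simp only [add_sub_cancel_right] at h
      simp [moveN]
      linarith
    · simp [moveN, hji, hj1, show j - 1 ≠ i by omega]
      linarith [hσ j]

lemma exp_update_sub_lt (hβ : 0 < β) (hσa : ∀ i : ℤ, exp (σ i) < 𝔞)
    (i k : ℤ) : exp (Function.update σ i (σ i - β) k) < 𝔞 := by
  by_cases hki : k = i
  · subst hki
    simpa using (exp_lt_exp.mpr (sub_lt_self (σ k) hβ)).trans (hσa k)
  · simpa [hki] using hσa k

end Development

/-- Theorem 2, case (ii): multiple random walking shocks in the totally asymmetric q-zero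
range process. The walker at site `i` jumps to `i + 1` with rate
`(1 - e^{-β m_i})·(𝔞 - e^{σ_i})`, updating `m` by `m^{i,i+1}` and `σ_i` to `σ_i - β`. -/
theorem rws_multi_qTAZRP
    (𝔞 β : ℝ) (h𝔞 : 0 < 𝔞) (hβ : 0 < β)
    (g : ℕ → ℝ) (hg : ∀ y : ℕ, g y = 𝔞 * (1 - exp (-β * y)))
    (m : ℤ → ℕ) (hm : (Function.support m).Finite)
    (σ : ℤ → ℝ) (hσ : ∀ i : ℤ, σ (i - 1) - σ i = -β * m i)
    (hσa : ∀ i : ℤ, exp (σ i) < 𝔞)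
    (ν : (ℤ → ℝ) → (ℤ → ℕ) → Measure (ConfN × ConfN))
    (hν : ∀ (σ' : ℤ → ℝ) (m' : ℤ → ℕ), (Function.support m').Finite →
      (∀ i : ℤ, σ' (i - 1) - σ' i = -β * m' i) → (∀ i : ℤ, exp (σ' i) < 𝔞) →
      IsProductMeasure (multiFactor g σ' m') (ν σ' m'))
    (φ : ConfN × ConfN → ℝ) (hφ : IsBddCylinder φ) :
    ∫ x, LN 1 g φ x ∂(ν σ m)
      = ∑' i : ℤ, (1 - exp (-β * m i)) * (𝔞 - exp (σ i)) *
          ((∫ x, φ x ∂(ν (Function.update σ i (σ i - β)) (moveN m i (i + 1))))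
            - ∫ x, φ x ∂(ν σ m)) := by
  obtain ⟨s, hs⟩ := hφ.1
  have hp := hν σ m hm hσ hσa
  set E := ∫ x, φ x ∂(ν σ m)
  set b : ℤ → ℝ := fun j => exp (σ (j - 1)) * (∫ x, φ (addParticle j x) ∂(ν σ m) - E)
  have hb : (Function.support b).Finite := s.finite_toSet.subset fun j hj => by
    by_contra hjs
    exact hj (by simp [b, E, integral_addParticle_of_notMem hs hjs])
  have hc : (Function.support fun i => (1 - exp (-β * m i)) * (𝔞 - exp (σ i)) *
      ((∫ x, φ x ∂(ν (Function.update σ i (σ i - β)) (moveN m i (i + 1)))) - E)).Finite :=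
    hm.subset fun i hi hmi => hi (by simp [hmi])
  rw [integral_LN_one (abs_qrate_le h𝔞.le hβ.le hg) hp hφ]
  have hsite : ∀ i, ∫ x, siteTerm g φ i x ∂(ν σ m)
      = (1 - exp (-β * m i)) * (𝔞 - exp (σ i)) *
          ((∫ x, φ x ∂(ν (Function.update σ i (σ i - β)) (moveN m i (i + 1)))) - E)
        + (b (i + 1) - b i) := fun i => by
    rw [integral_siteTerm h𝔞 hβ hg (hσ i) (hσa i) hp (fun hmi => hν _ _
      (support_moveN_finite hm i (i + 1)) (update_sub_moveN hσ hmi)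
      (exp_update_sub_lt hβ hσa i)) hφ]
    simp only [b, E, add_sub_cancel_right]
  rw [tsum_congr hsite,
    ((summable_of_hasFiniteSupport hc).hasSum.add (hasSum_sub_shift hb)).tsum_eq, add_zero]
end

section
/- (Rankine–Hugoniot velocity for two interacting shocks in q-TAZRP.) Let 𝔞, β > 0 and θ be real with e^{θ+2β} < 𝔞, and let g(z) = 𝔞·(1 − e^{−βz}) on ℕ. Define r₀↑ := (1 − e^{−2β})·(𝔞 − e^{θ+2β}), r₊↑ := (1 − e^{−β})·(𝔞 − e^{θ+2β}), r↓ := (1 − e^{−β})·(𝔞 − e^{θ+β}), and the center-of-mass velocity C := r₀↑·r↓/(r↓ + r₀↑ − r₊↑). With the density ρ(τ) := Σ_{z=0}^∞ z·μ^τ(z), the Rankine–Hugoniot velocity of the pair of shocks equals C: (e^{θ+2β} − e^{θ})/(ρ(θ+2β) − ρ(θ)) = C. -/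
open Real

/-! With `q = e^{-β}` and `x = e^τ / 𝔞` one has `g(z)! = 𝔞^z (q;q)_z`, so `μ^τ(z) ∝ x^z / (q;q)_z`
and `ρ(τ) = S(x) / Z(x)` with `Z(x) = ∑ xⁿ/(q;q)ₙ`, `S(x) = ∑ n xⁿ/(q;q)ₙ`. Since
`(q;q)ₙ₊₁ = (q;q)ₙ (1 - qⁿ⁺¹)`, comparing the series at `x` and `qx` term by term gives
`Z(qx) = (1 - x) Z(x)` and `S(x) - S(qx) = x (S(x) + Z(x))`, hence `ρ(x) - ρ(qx) = x / (1 - x)`.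
Raising `τ` by `β` divides `x` by `q`, so the density jump across the two shocks telescopes to
`x₂/(1 - x₂) + x₁/(1 - x₁)` with `x_k = e^{θ+kβ}/𝔞`, and the rest is algebra. -/

open Filter Topology

/-- `(q;q)ₙ`. -/
noncomputable def qPochhammer (q : ℝ) (n : ℕ) : ℝ := ∏ y ∈ Finset.Icc 1 n, (1 - q ^ y)

noncomputable def qPartition (q x : ℝ) : ℝ := ∑' n : ℕ, x ^ n / qPochhammer q n

noncomputable def qMoment (q x : ℝ) : ℝ := ∑' n : ℕ, (n : ℝ) * x ^ n / qPochhammer q n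

noncomputable def qDensity (q x : ℝ) : ℝ := qMoment q x / qPartition q x

section qSeries

variable {q x : ℝ}

lemma qPochhammer_succ (q : ℝ) (n : ℕ) :
    qPochhammer q (n + 1) = qPochhammer q n * (1 - q ^ (n + 1)) :=
  Finset.prod_Icc_succ_top (by omega) _

lemma one_sub_pow_pos (hq : |q| < 1) {n : ℕ} (hn : n ≠ 0) : 0 < 1 - q ^ n := by
  have : |q ^ n| < 1 := by rw [abs_pow]; exact pow_lt_one₀ (abs_nonneg q) hq hn
  linarith [le_abs_self (q ^ n)]

lemma qPochhammer_pos (hq : |q| < 1) (n : ℕ) : 0 < qPochhammer q n :=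
  Finset.prod_pos fun y hy => one_sub_pow_pos hq (by linarith [(Finset.mem_Icc.mp hy).1])

lemma summable_succ_mul_pow_div_qPochhammer (hq : |q| < 1) (hx : |x| < 1) :
    Summable fun n : ℕ => ((n : ℝ) + 1) * (x ^ n / qPochhammer q n) := by
  rcases eq_or_ne x 0 with rfl | hx0
  · exact summable_of_ne_finset_zero (s := {0}) fun n hn => by simp_all
  refine summable_of_ratio_test_tendsto_lt_one hx (.of_forall fun n => ?_) ?_
  · exact mul_ne_zero (by positivity) (div_ne_zero (pow_ne_zero n hx0) (qPochhammer_pos hq n).ne')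
  have hratio : Tendsto (fun n : ℕ => |x| * ((2 + 1 * n) / (1 + 1 * n)) / (1 - q ^ (n + 1)))
      atTop (𝓝 (|x| * (1 / 1) / (1 - 0))) :=
    ((tendsto_add_mul_div_add_mul_atTop_nhds 2 1 1 one_ne_zero).const_mul _).div
      (tendsto_const_nhds.sub ((tendsto_pow_atTop_nhds_zero_of_abs_lt_one hq).comp
        (tendsto_add_atTop_nat 1))) (by norm_num)
  simp only [div_one, sub_zero, mul_one] at hratio
  refine hratio.congr fun n => ?_
  have hP := qPochhammer_pos hq n
  have hq1 := one_sub_pow_pos hq n.succ_ne_zero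
  have hn : (0 : ℝ) < n + 1 := by positivity
  rw [qPochhammer_succ]
  push_cast
  simp only [norm_div, norm_mul, norm_pow, Real.norm_eq_abs, abs_of_pos hP, abs_of_pos hq1,
    abs_of_pos hn, abs_of_pos (by positivity : (0 : ℝ) < n + 1 + 1)]
  have : |x| ^ n ≠ 0 := pow_ne_zero _ (abs_ne_zero.mpr hx0)
  field_simp
  ring

lemma Summable.of_abs_le_succ_mul {a c : ℕ → ℝ} (ha : Summable fun n : ℕ => ((n : ℝ) + 1) * a n)
    (hc : ∀ n, |c n| ≤ n + 1) : Summable fun n => c n * a n :=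
  ha.abs.of_norm_bounded fun n => by
    rw [Real.norm_eq_abs, abs_mul, abs_mul, abs_of_pos (by positivity : (0 : ℝ) < n + 1)]
    exact mul_le_mul_of_nonneg_right (hc n) (abs_nonneg _)

lemma summable_pow_div_qPochhammer (hq : |q| < 1) (hx : |x| < 1) :
    Summable fun n : ℕ => x ^ n / qPochhammer q n := by
  simpa using (summable_succ_mul_pow_div_qPochhammer hq hx).of_abs_le_succ_mul
    (c := fun _ => 1) fun n => by simp

lemma summable_natCast_mul_pow_div_qPochhammer (hq : |q| < 1) (hx : |x| < 1) :
    Summable fun n : ℕ => (n : ℝ) * x ^ n / qPochhammer q n := by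
  simp_rw [mul_div_assoc]
  exact (summable_succ_mul_pow_div_qPochhammer hq hx).of_abs_le_succ_mul fun n => by simp

lemma abs_mul_lt_one (hq : |q| < 1) (hx : |x| < 1) : |q * x| < 1 := by
  rw [abs_mul]; nlinarith [abs_nonneg q, abs_nonneg x]

lemma tsum_mul_pow_div_qPochhammer_sub (hq : |q| < 1) {f : ℕ → ℝ}
    (h₁ : Summable fun n : ℕ => f n * x ^ n / qPochhammer q n)
    (h₂ : Summable fun n : ℕ => f n * (q * x) ^ n / qPochhammer q n) :
    ∑' n : ℕ, f n * x ^ n / qPochhammer q n - ∑' n : ℕ, f n * (q * x) ^ n / qPochhammer q n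
      = x * ∑' n : ℕ, f (n + 1) * x ^ n / qPochhammer q n := by
  rw [← h₁.tsum_sub h₂, (h₁.sub h₂).tsum_eq_zero_add, ← tsum_mul_left]
  simp only [pow_zero, sub_self, zero_add]
  congr 1
  funext n
  have hP := (qPochhammer_pos hq n).ne'
  have hq1 := (one_sub_pow_pos hq n.succ_ne_zero).ne'
  rw [qPochhammer_succ, mul_pow]
  field_simp
  ring

lemma qPartition_q_mul (hq : |q| < 1) (hx : |x| < 1) :
    qPartition q (q * x) = (1 - x) * qPartition q x := by
  have h := tsum_mul_pow_div_qPochhammer_sub hq (f := fun _ => 1)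
    (by simpa using summable_pow_div_qPochhammer hq hx)
    (by simpa using summable_pow_div_qPochhammer hq (abs_mul_lt_one hq hx))
  simp only [one_mul] at h
  rw [qPartition, qPartition]
  linarith

lemma qMoment_sub_qMoment_q_mul (hq : |q| < 1) (hx : |x| < 1) :
    qMoment q x - qMoment q (q * x) = x * (qMoment q x + qPartition q x) := by
  rw [qMoment, qMoment, tsum_mul_pow_div_qPochhammer_sub hq
    (summable_natCast_mul_pow_div_qPochhammer hq hx)
    (summable_natCast_mul_pow_div_qPochhammer hq (abs_mul_lt_one hq hx)), qPartition,
    ← (summable_natCast_mul_pow_div_qPochhammer hq hx).tsum_add (summable_pow_div_qPochhammer hq hx)]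
  congr 2
  funext n
  push_cast
  ring

lemma qPartition_pos (hq : |q| < 1) (hx₀ : 0 ≤ x) (hx₁ : x < 1) : 0 < qPartition q x :=
  (summable_pow_div_qPochhammer hq (abs_lt.mpr ⟨by linarith, hx₁⟩)).tsum_pos
    (fun n => div_nonneg (pow_nonneg hx₀ n) (qPochhammer_pos hq n).le) 0 (by simp [qPochhammer])

lemma qDensity_sub_qDensity_q_mul (hq : |q| < 1) (hx₀ : 0 ≤ x) (hx₁ : x < 1) :
    qDensity q x - qDensity q (q * x) = x / (1 - x) := by
  have hx : |x| < 1 := abs_lt.mpr ⟨by linarith, hx₁⟩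
  have hZ := (qPartition_pos hq hx₀ hx₁).ne'
  have h1x : 1 - x ≠ 0 := by linarith
  have hS : qMoment q (q * x) = (1 - x) * qMoment q x - x * qPartition q x := by
    linarith [qMoment_sub_qMoment_q_mul hq hx]
  rw [qDensity, qDensity, qPartition_q_mul hq hx, hS]
  field_simp
  ring

end qSeries

section qTAZRP

variable {𝔞 β : ℝ} {g : ℕ → ℝ}

lemma gfact_eq_pow_mul_qPochhammer (hg : ∀ z : ℕ, g z = 𝔞 * (1 - exp (-β * z))) (n : ℕ) :
    gfact g n = 𝔞 ^ n * qPochhammer (exp (-β)) n := by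
  simp_rw [gfact, qPochhammer, hg, mul_comm (-β), exp_nat_mul, Finset.prod_mul_distrib,
    Finset.prod_const, Nat.card_Icc, add_tsub_cancel_right]

lemma exp_mul_div_gfact (hg : ∀ z : ℕ, g z = 𝔞 * (1 - exp (-β * z))) (τ : ℝ) (n : ℕ) :
    exp (τ * n) / gfact g n = (exp τ / 𝔞) ^ n / qPochhammer (exp (-β)) n := by
  rw [gfact_eq_pow_mul_qPochhammer hg, mul_comm τ, exp_nat_mul, div_pow, div_div]

lemma tsum_natCast_mul_muN_eq_qDensity (hg : ∀ z : ℕ, g z = 𝔞 * (1 - exp (-β * z))) (τ : ℝ) :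
    ∑' z : ℕ, (z : ℝ) * muN g τ z = qDensity (exp (-β)) (exp τ / 𝔞) := by
  have hZ : ZN g τ = qPartition (exp (-β)) (exp τ / 𝔞) := by
    simp_rw [ZN, exp_mul_div_gfact hg, qPartition]
  simp_rw [muN, div_mul_eq_div_div, exp_mul_div_gfact hg, hZ, mul_div_assoc', tsum_div_const,
    qDensity, qMoment]

end qTAZRP

lemma two_shock_speed_eq {a E u : ℝ} (hE : 0 < E) (hu₀ : 0 ≤ u) (hu₁ : u < 1) (hEa : E < a) :
    (E - u ^ 2 * E) / (E / a / (1 - E / a) + u * (E / a) / (1 - u * (E / a)))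
      = (1 - u ^ 2) * (a - E) * ((1 - u) * (a - u * E))
        / ((1 - u) * (a - u * E) + (1 - u ^ 2) * (a - E) - (1 - u) * (a - E)) := by
  have ha : a ≠ 0 := by linarith
  have hE₁ : a - E ≠ 0 := by linarith
  have hE₂ : a - u * E ≠ 0 := by nlinarith
  have hu : 1 - u ≠ 0 := by linarith
  have hsum : a - u * E + u * (a - E) ≠ 0 := by nlinarith
  have hL : E / a / (1 - E / a) + u * (E / a) / (1 - u * (E / a))
      = E * (a - u * E + u * (a - E)) / ((a - E) * (a - u * E)) := by
    have hx₁ : E / a / (1 - E / a) = E / (a - E) := by field_simp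
    have hx₂ : u * (E / a) / (1 - u * (E / a)) = u * E / (a - u * E) := by field_simp
    rw [hx₁, hx₂, div_add_div _ _ hE₁ hE₂]
    ring
  have hR : (1 - u) * (a - u * E) + (1 - u ^ 2) * (a - E) - (1 - u) * (a - E)
      = (1 - u) * (a - u * E + u * (a - E)) := by ring
  rw [hL, hR, div_div_eq_mul_div, div_eq_div_iff (by positivity) (by positivity)]
  ring

theorem rankine_hugoniot_two_shocks_general
    (𝔞 β θ : ℝ) (hβ : 0 < β)
    (hbound : exp (θ + 2 * β) < 𝔞)
    (g : ℕ → ℝ) (hg : ∀ z : ℕ, g z = 𝔞 * (1 - exp (-β * z))) :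
    (exp (θ + 2 * β) - exp θ) /
        ((∑' z : ℕ, (z : ℝ) * muN g (θ + 2 * β) z) - ∑' z : ℕ, (z : ℝ) * muN g θ z)
      = ((1 - exp (-2 * β)) * (𝔞 - exp (θ + 2 * β)))
          * ((1 - exp (-β)) * (𝔞 - exp (θ + β)))
        / ((1 - exp (-β)) * (𝔞 - exp (θ + β))
            + (1 - exp (-2 * β)) * (𝔞 - exp (θ + 2 * β))
            - (1 - exp (-β)) * (𝔞 - exp (θ + 2 * β))) := by
  set E := exp (θ + 2 * β)
  set u := exp (-β)
  have hu₀ : 0 < u := exp_pos _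
  have hu₁ : u < 1 := exp_lt_one_iff.mpr (by linarith)
  have hE : 0 < E := exp_pos _
  have hx₁ : E / 𝔞 < 1 := (div_lt_one (hE.trans hbound)).mpr hbound
  have hx₀ : 0 ≤ E / 𝔞 := div_nonneg hE.le (hE.trans hbound).le
  have hθβ : exp (θ + β) = u * E := by rw [← exp_add]; ring_nf
  have hθ : exp θ = u ^ 2 * E := by rw [← exp_nat_mul, ← exp_add]; ring_nf
  have hu2 : exp (-2 * β) = u ^ 2 := by rw [← exp_nat_mul]; ring_nf
  have hρ : qDensity u (E / 𝔞) - qDensity u (u * (u * (E / 𝔞)))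
      = E / 𝔞 / (1 - E / 𝔞) + u * (E / 𝔞) / (1 - u * (E / 𝔞)) := by
    have hq : |u| < 1 := by rwa [abs_of_pos hu₀]
    linarith [qDensity_sub_qDensity_q_mul hq hx₀ hx₁,
      qDensity_sub_qDensity_q_mul hq (by positivity) ((mul_le_of_le_one_left hx₀ hu₁.le).trans_lt hx₁)]
  rw [tsum_natCast_mul_muN_eq_qDensity hg, tsum_natCast_mul_muN_eq_qDensity hg, hθ,
    show u ^ 2 * E / 𝔞 = u * (u * (E / 𝔞)) by ring, hρ, hθβ, hu2]
  exact two_shock_speed_eq hE hu₀.le hu₁ hbound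

/-- Rankine–Hugoniot velocity for two interacting shocks in q-TAZRP equals the stationary
center-of-mass velocity `C = r₀↑·r↓ / (r↓ + r₀↑ - r₊↑)` of the two shock-walkers. -/
theorem rankine_hugoniot_two_shocks
    (𝔞 β θ : ℝ) (h𝔞 : 0 < 𝔞) (hβ : 0 < β)
    (hbound : exp (θ + 2 * β) < 𝔞)
    (g : ℕ → ℝ) (hg : ∀ z : ℕ, g z = 𝔞 * (1 - exp (-β * z))) :
    (exp (θ + 2 * β) - exp θ) /
        ((∑' z : ℕ, (z : ℝ) * muN g (θ + 2 * β) z) - ∑' z : ℕ, (z : ℝ) * muN g θ z)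
      = ((1 - exp (-2 * β)) * (𝔞 - exp (θ + 2 * β)))
          * ((1 - exp (-β)) * (𝔞 - exp (θ + β)))
        / ((1 - exp (-β)) * (𝔞 - exp (θ + β))
            + (1 - exp (-2 * β)) * (𝔞 - exp (θ + 2 * β))
            - (1 - exp (-β)) * (𝔞 - exp (θ + 2 * β))) :=
  rankine_hugoniot_two_shocks_general 𝔞 β θ hβ hbound g hg
end

section
/- (Density shift across a shock in q-TAZRP.) Let 𝔞, β > 0 and g(z) = 𝔞·(1 − e^{−βz}) on ℕ, and let σ ∈ ℝ with e^{σ} < 𝔞. Define ρ(τ) := Σ_{z=0}^∞ z·μ^τ(z). Then both ρ(σ) and ρ(σ−β) are finite and ρ(σ−β) = ρ(σ) − e^{σ}/(𝔞 − e^{σ}); in particular the density is strictly larger on the right of the shock than on its left. -/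
open Real

/-! Auxiliary definitions and lemmas -/

noncomputable def Pq (q : ℝ) (z : ℕ) : ℝ := ∏ y ∈ Finset.Icc 1 z, (1 - q ^ y)

noncomputable def aa (x q : ℝ) (z : ℕ) : ℝ := x ^ z / Pq q z

lemma Pq_pos {q : ℝ} (hq0 : 0 < q) (hq1 : q < 1) (z : ℕ) : 0 < Pq q z := by
  refine Finset.prod_pos fun y hy => ?_
  have hy1 : 1 ≤ y := (Finset.mem_Icc.mp hy).1
  have : q ^ y < 1 := pow_lt_one₀ hq0.le hq1 (by omega)
  linarith

lemma aa_pos {x q : ℝ} (hx : 0 < x) (hq0 : 0 < q) (hq1 : q < 1) (z : ℕ) : 0 < aa x q z :=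
  div_pos (pow_pos hx z) (Pq_pos hq0 hq1 z)

lemma aa_zero (x q : ℝ) : aa x q 0 = 1 := by
  simp [aa, Pq]

lemma Pq_succ (q : ℝ) (z : ℕ) : Pq q (z + 1) = Pq q z * (1 - q ^ (z + 1)) := by
  unfold Pq
  rw [Finset.prod_Icc_succ_top (by omega)]

lemma aa_rec {x q : ℝ} (hq0 : 0 < q) (hq1 : q < 1) (z : ℕ) :
    (1 - q ^ (z + 1)) * aa x q (z + 1) = x * aa x q z := by
  have h1 : (0 : ℝ) < 1 - q ^ (z + 1) := by
    have : q ^ (z + 1) < 1 := pow_lt_one₀ hq0.le hq1 (by omega)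
    linarith
  have hP := (Pq_pos hq0 hq1 z).ne'
  unfold aa
  rw [Pq_succ, div_mul_eq_div_div, mul_comm, div_mul_cancel₀ _ h1.ne', pow_succ', mul_div_assoc]

lemma summable_aa {x q : ℝ} (hx0 : 0 < x) (hx1 : x < 1) (hq0 : 0 < q) (hq1 : q < 1) :
    Summable (aa x q) := by
  set r : ℝ := (1 + x) / 2 with hr
  have hxr : x < r := by rw [hr]; linarith
  have hr0 : 0 < r := by rw [hr]; linarith
  have hr1 : r < 1 := by rw [hr]; linarith
  refine summable_of_ratio_norm_eventually_le hr1 ?_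
  have htend : Filter.Tendsto (fun z : ℕ => q ^ (z + 1)) Filter.atTop (nhds 0) := by
    have := tendsto_pow_atTop_nhds_zero_of_lt_one hq0.le hq1
    exact this.comp (Filter.tendsto_add_atTop_nat 1)
  have hxr' : 0 < 1 - x / r := by
    rw [sub_pos, div_lt_one hr0]; exact hxr
  filter_upwards [htend.eventually_le_const hxr'] with z hz
  have h1 : x / r ≤ 1 - q ^ (z + 1) := by linarith
  have hrec := aa_rec (x := x) hq0 hq1 z
  have ha0 := aa_pos hx0 hq0 hq1 z
  have ha1 := aa_pos hx0 hq0 hq1 (z + 1)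
  rw [Real.norm_of_nonneg ha1.le, Real.norm_of_nonneg ha0.le]
  have hq2 : (0 : ℝ) < 1 - q ^ (z + 1) := lt_of_lt_of_le (by positivity) h1
  have : x * aa x q z ≤ (1 - q ^ (z + 1)) * (r * aa x q z) := by
    have := mul_le_mul_of_nonneg_right h1 (mul_pos hr0 ha0).le
    calc x * aa x q z = x / r * (r * aa x q z) := by field_simp
      _ ≤ (1 - q ^ (z + 1)) * (r * aa x q z) := this
  rw [← hrec] at this
  exact le_of_mul_le_mul_left this hq2

lemma summable_mul_aa {x q : ℝ} (hx0 : 0 < x) (hx1 : x < 1) (hq0 : 0 < q) (hq1 : q < 1) :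
    Summable (fun z : ℕ => (z : ℝ) * aa x q z) := by
  set r : ℝ := (1 + x) / 2 with hr
  have hxr : x < r := by rw [hr]; linarith
  have hr0 : 0 < r := by rw [hr]; linarith
  have hr1 : r < 1 := by rw [hr]; linarith
  have hsum : Summable (aa r q) := summable_aa hr0 hr1 hq0 hq1
  obtain ⟨C, hC⟩ := (hsum.tendsto_atTop_zero.bddAbove_range)
  have hC' : ∀ z : ℕ, aa r q z ≤ C := fun z => hC (Set.mem_range_self z)
  have hkey : ∀ z : ℕ, aa x q z = (x / r) ^ z * aa r q z := by
    intro z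
    unfold aa
    rw [div_pow]
    have : (r : ℝ) ^ z ≠ 0 := by positivity
    field_simp
  have hgeo : Summable (fun z : ℕ => C * ((z : ℝ) * (x / r) ^ z)) := by
    apply Summable.mul_left
    have hnorm : ‖x / r‖ < 1 := by
      rw [Real.norm_of_nonneg (by positivity)]
      rw [div_lt_one hr0]; exact hxr
    simpa using summable_pow_mul_geometric_of_norm_lt_one 1 hnorm
  refine Summable.of_nonneg_of_le (fun z => ?_) (fun z => ?_) hgeo
  · exact mul_nonneg (Nat.cast_nonneg z) (aa_pos hx0 hq0 hq1 z).le
  · rw [hkey]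
    have h1 : (0 : ℝ) ≤ (z : ℝ) * (x / r) ^ z := by positivity
    calc (z : ℝ) * ((x / r) ^ z * aa r q z) = (z : ℝ) * (x / r) ^ z * aa r q z := by ring
      _ ≤ (z : ℝ) * (x / r) ^ z * C := mul_le_mul_of_nonneg_left (hC' z) h1
      _ = C * ((z : ℝ) * (x / r) ^ z) := by ring

/-- Density shift across a shock in q-TAZRP: `ρ(σ - β) = ρ(σ) - e^σ/(𝔞 - e^σ)`, so in
particular the density is strictly larger on the right of the shock than on its left. -/
theorem density_shift_qTAZRP
    (𝔞 β σ : ℝ) (h𝔞 : 0 < 𝔞) (hβ : 0 < β) (hσ : exp σ < 𝔞)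
    (g : ℕ → ℝ) (hg : ∀ z : ℕ, g z = 𝔞 * (1 - exp (-β * z))) :
    (Summable fun z : ℕ => (z : ℝ) * muN g σ z) ∧
    (Summable fun z : ℕ => (z : ℝ) * muN g (σ - β) z) ∧
    (∑' z : ℕ, (z : ℝ) * muN g (σ - β) z)
      = (∑' z : ℕ, (z : ℝ) * muN g σ z) - exp σ / (𝔞 - exp σ) ∧
    (∑' z : ℕ, (z : ℝ) * muN g (σ - β) z) < ∑' z : ℕ, (z : ℝ) * muN g σ z := by
  set q : ℝ := exp (-β) with hqdef
  have hq0 : 0 < q := exp_pos _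
  have hq1 : q < 1 := by
    rw [hqdef, exp_lt_one_iff]; linarith
  set x : ℝ := exp σ / 𝔞 with hxdef
  have hx0 : 0 < x := div_pos (exp_pos _) h𝔞
  have hx1 : x < 1 := (div_lt_one h𝔞).mpr hσ
  have hxq0 : 0 < x * q := mul_pos hx0 hq0
  have hxq1 : x * q < 1 := by
    calc x * q < 1 * 1 := by
          apply mul_lt_mul' hx1.le hq1 hq0.le one_pos
      _ = 1 := one_mul 1
  -- gfact in terms of Pq
  have hgf : ∀ z : ℕ, gfact g z = 𝔞 ^ z * Pq q z := by
    intro z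
    unfold gfact Pq
    rw [show (∏ y ∈ Finset.Icc 1 z, g y) = ∏ y ∈ Finset.Icc 1 z, 𝔞 * (1 - q ^ y) from ?_,
      Finset.prod_mul_distrib, Finset.prod_const, Nat.card_Icc]
    · simp
    · refine Finset.prod_congr rfl fun y _ => ?_
      rw [hg y, hqdef, ← Real.exp_nat_mul, mul_comm (y : ℝ) (-β)]
  -- pointwise identities for the weights
  have hA : ∀ z : ℕ, exp (σ * z) / gfact g z = aa x q z := by
    intro z
    have hexp : exp (σ * z) = 𝔞 ^ z * x ^ z := by
      rw [mul_comm σ (z : ℝ), Real.exp_nat_mul, ← mul_pow]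
      congr 1
      rw [hxdef]
      field_simp
    rw [hexp, hgf, aa]
    rw [mul_div_mul_left _ _ (by positivity : (𝔞 : ℝ) ^ z ≠ 0)]
  have hB : ∀ z : ℕ, exp ((σ - β) * z) / gfact g z = aa (x * q) q z := by
    intro z
    have hexp : exp ((σ - β) * z) = 𝔞 ^ z * (x * q) ^ z := by
      rw [mul_comm (σ - β) (z : ℝ), Real.exp_nat_mul, ← mul_pow]
      congr 1
      rw [sub_eq_add_neg, Real.exp_add, hxdef, hqdef]
      field_simp
    rw [hexp, hgf, aa]
    rw [mul_div_mul_left _ _ (by positivity : (𝔞 : ℝ) ^ z ≠ 0)]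
  -- key recursion for the shifted weights
  have haq : ∀ z : ℕ, aa (x * q) q (z + 1) = aa x q (z + 1) - x * aa x q z := by
    intro z
    have h2 : aa (x * q) q (z + 1) = aa x q (z + 1) * q ^ (z + 1) := by
      unfold aa
      rw [mul_pow]
      ring
    rw [h2]
    linear_combination -(aa_rec (x := x) hq0 hq1 z)
  -- summabilities
  have S1 : Summable (aa x q) := summable_aa hx0 hx1 hq0 hq1
  have S2 : Summable (fun z : ℕ => (z : ℝ) * aa x q z) := summable_mul_aa hx0 hx1 hq0 hq1
  have S1' : Summable (aa (x * q) q) := summable_aa hxq0 hxq1 hq0 hq1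
  have S2' : Summable (fun z : ℕ => (z : ℝ) * aa (x * q) q z) :=
    summable_mul_aa hxq0 hxq1 hq0 hq1
  set Z : ℝ := ∑' z : ℕ, aa x q z with hZdef
  set S : ℝ := ∑' z : ℕ, (z : ℝ) * aa x q z with hSdef
  have hZpos : 0 < Z := Summable.tsum_pos S1 (fun z => (aa_pos hx0 hq0 hq1 z).le) 0 (aa_pos hx0 hq0 hq1 0)
  have hZN : ZN g σ = Z := tsum_congr hA
  -- shifted partition function
  have hshift1 : Summable (fun z : ℕ => aa x q (z + 1)) := (summable_nat_add_iff 1).mpr S1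
  have htail : (∑' z : ℕ, aa x q (z + 1)) = Z - 1 := by
    have := Summable.tsum_eq_zero_add S1
    rw [aa_zero] at this
    rw [hZdef]; linarith
  have hZq : ZN g (σ - β) = (1 - x) * Z := by
    have h1 : ZN g (σ - β) = ∑' z : ℕ, aa (x * q) q z := tsum_congr hB
    rw [h1, Summable.tsum_eq_zero_add S1', aa_zero]
    have h2 : (∑' z : ℕ, aa (x * q) q (z + 1))
        = (∑' z : ℕ, aa x q (z + 1)) - x * Z := by
      rw [show (fun z : ℕ => aa (x * q) q (z + 1))
          = fun z : ℕ => aa x q (z + 1) - x * aa x q z from funext haq]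
      rw [Summable.tsum_sub hshift1 (S1.mul_left x), tsum_mul_left]
    rw [h2, htail]; ring
  -- shifted first moment
  have hshift2 : Summable (fun z : ℕ => ((z : ℝ) + 1) * aa x q (z + 1)) := by
    have := (summable_nat_add_iff 1).mpr S2
    refine this.congr fun z => ?_
    push_cast
    ring
  have hS1 : (∑' z : ℕ, ((z : ℝ) + 1) * aa x q (z + 1)) = S := by
    have h0 := Summable.tsum_eq_zero_add S2
    simp only [Nat.cast_zero, zero_mul, zero_add] at h0
    rw [hSdef, h0]
    refine tsum_congr fun z => ?_
    push_cast
    ring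
  have hplus : Summable (fun z : ℕ => ((z : ℝ) + 1) * aa x q z) := by
    refine (S2.add S1).congr fun z => ?_
    ring
  have hS2 : (∑' z : ℕ, ((z : ℝ) + 1) * aa x q z) = S + Z := by
    rw [show (fun z : ℕ => ((z : ℝ) + 1) * aa x q z)
        = fun z : ℕ => (z : ℝ) * aa x q z + aa x q z from funext fun z => by ring]
    rw [Summable.tsum_add S2 S1]
  have hSq : (∑' z : ℕ, (z : ℝ) * aa (x * q) q z) = S - x * (S + Z) := by
    rw [Summable.tsum_eq_zero_add S2']
    simp only [Nat.cast_zero, zero_mul, zero_add]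
    have h2 : (∑' z : ℕ, ((z : ℝ) + 1) * aa (x * q) q (z + 1))
        = (∑' z : ℕ, ((z : ℝ) + 1) * aa x q (z + 1))
          - x * ∑' z : ℕ, ((z : ℝ) + 1) * aa x q z := by
      rw [show (fun z : ℕ => ((z : ℝ) + 1) * aa (x * q) q (z + 1))
          = fun z : ℕ => ((z : ℝ) + 1) * aa x q (z + 1) - x * (((z : ℝ) + 1) * aa x q z)
          from funext fun z => by rw [haq]; ring]
      rw [Summable.tsum_sub hshift2 (hplus.mul_left x), tsum_mul_left]
    calc (∑' z : ℕ, (((z + 1 : ℕ)) : ℝ) * aa (x * q) q (z + 1))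
        = ∑' z : ℕ, ((z : ℝ) + 1) * aa (x * q) q (z + 1) := by
          refine tsum_congr fun z => by push_cast; ring
      _ = _ := by rw [h2, hS1, hS2]
  -- expressing the density sums
  have hmu1 : ∀ z : ℕ, (z : ℝ) * muN g σ z = (z : ℝ) * aa x q z / Z := by
    intro z
    rw [muN, hZN, ← div_div, hA, mul_div_assoc]
  have hmu2 : ∀ z : ℕ, (z : ℝ) * muN g (σ - β) z = (z : ℝ) * aa (x * q) q z / ((1 - x) * Z) := by
    intro z
    rw [muN, hZq, ← div_div, hB, mul_div_assoc]
  have hsum1 : Summable (fun z : ℕ => (z : ℝ) * muN g σ z) := by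
    rw [show (fun z : ℕ => (z : ℝ) * muN g σ z)
        = fun z : ℕ => (z : ℝ) * aa x q z / Z from funext hmu1]
    exact S2.div_const Z
  have hsum2 : Summable (fun z : ℕ => (z : ℝ) * muN g (σ - β) z) := by
    rw [show (fun z : ℕ => (z : ℝ) * muN g (σ - β) z)
        = fun z : ℕ => (z : ℝ) * aa (x * q) q z / ((1 - x) * Z) from funext hmu2]
    exact S2'.div_const _
  have ht1 : (∑' z : ℕ, (z : ℝ) * muN g σ z) = S / Z := by
    rw [show (fun z : ℕ => (z : ℝ) * muN g σ z)
        = fun z : ℕ => (z : ℝ) * aa x q z / Z from funext hmu1]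
    rw [tsum_div_const]
  have ht2 : (∑' z : ℕ, (z : ℝ) * muN g (σ - β) z) = (S - x * (S + Z)) / ((1 - x) * Z) := by
    rw [show (fun z : ℕ => (z : ℝ) * muN g (σ - β) z)
        = fun z : ℕ => (z : ℝ) * aa (x * q) q z / ((1 - x) * Z) from funext hmu2]
    rw [tsum_div_const, hSq]
  -- the key algebraic identity
  have h1x : (0 : ℝ) < 1 - x := by linarith
  have hxfrac : exp σ / (𝔞 - exp σ) = x / (1 - x) := by
    rw [div_eq_div_iff (ne_of_gt (by linarith : (0:ℝ) < 𝔞 - exp σ)) h1x.ne']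
    rw [hxdef]
    field_simp
  have hEq : (∑' z : ℕ, (z : ℝ) * muN g (σ - β) z)
      = (∑' z : ℕ, (z : ℝ) * muN g σ z) - exp σ / (𝔞 - exp σ) := by
    rw [ht1, ht2, hxfrac]
    field_simp
    ring
  refine ⟨hsum1, hsum2, hEq, ?_⟩
  rw [hEq]
  have : 0 < exp σ / (𝔞 - exp σ) := div_pos (exp_pos _) (by linarith)
  linarith
end
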